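/- Let A and C be positive definite Hermitian matrices. The function L(Y) = Tr(YA) + Tr(Y^{-1}C), defined on positive definite Hermitian matrices Y, attains its unique global minimum at Y = A^{-1} # C = A^{-1/2}(A^{1/2} C A^{1/2})^{1/2} A^{-1/2}. -/

import Mathlib

open Matrix
open scoped ComplexOrder

variable {n : Type*} [Fintype n] [DecidableEq n]

/-- Real power of a Hermitian matrix via the functional calculus
(junk value `0` on non-Hermitian input). For a positive definite matrix this is
the unique positive definite `r`-th power. -/
noncomputable def mpow (A : Matrix n n ℂ) (r : ℝ) : Matrix n n ℂ :=
  if hA : A.IsHermitian then hA.cfc (fun x : ℝ => x ^ r) else 0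

/-- The matrix geometric mean `A⁻¹ # C = A^{-1/2} (A^{1/2} C A^{1/2})^{1/2} A^{-1/2}`. -/
noncomputable def invGeoMean (A C : Matrix n n ℂ) : Matrix n n ℂ :=
  mpow A (-(1/2)) * mpow (mpow A (1/2) * C * mpow A (1/2)) (1/2) * mpow A (-(1/2))

/- ### Auxiliary lemmas -/

lemma contOn_spectrum (A : Matrix n n ℂ) (f : ℝ → ℝ) : ContinuousOn f (spectrum ℝ A) := by
  rw [continuousOn_iff_continuous_restrict]
  exact continuous_of_discreteTopology

lemma mpow_eq {A : Matrix n n ℂ} (hA : A.IsHermitian) (r : ℝ) :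
    mpow A r = cfc (fun x : ℝ => x ^ r) A := by
  rw [mpow, dif_pos hA, hA.cfc_eq]

lemma posDef_conj {M B : Matrix n n ℂ} (hM : M.PosDef) (hB : IsUnit B.det) :
    (B * M * Bᴴ).PosDef := by
  refine PosDef.of_dotProduct_mulVec_pos (isHermitian_mul_mul_conjTranspose B hM.1) fun x hx => ?_
  have hB' : IsUnit (Bᴴ).det := by rw [det_conjTranspose]; exact hB.star
  have hBx : Bᴴ *ᵥ x ≠ 0 := by
    intro h
    apply hx
    have h2 : (Bᴴ)⁻¹ *ᵥ (Bᴴ *ᵥ x) = x := by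
      rw [mulVec_mulVec, nonsing_inv_mul _ hB', one_mulVec]
    rw [← h2, h, mulVec_zero]
  have key : star x ⬝ᵥ (B * M * Bᴴ) *ᵥ x = star (Bᴴ *ᵥ x) ⬝ᵥ M *ᵥ (Bᴴ *ᵥ x) := by
    rw [star_mulVec, conjTranspose_conjTranspose, ← mulVec_mulVec, ← mulVec_mulVec,
      dotProduct_mulVec]
  rw [key]
  exact hM.dotProduct_mulVec_pos hBx

lemma cfc_posDef {A : Matrix n n ℂ} (hA : A.PosDef) {f : ℝ → ℝ}
    (hf : ∀ i, 0 < f (hA.1.eigenvalues i)) : (cfc f A).PosDef := by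
  rw [hA.1.cfc_eq, Matrix.IsHermitian.cfc]
  have hd : (Matrix.diagonal (RCLike.ofReal ∘ f ∘ hA.1.eigenvalues) : Matrix n n ℂ).PosDef := by
    rw [posDef_diagonal_iff]
    intro i
    simpa using hf i
  have hU : IsUnit ((IsHermitian.eigenvectorUnitary hA.1 : Matrix n n ℂ)).det := by
    rw [← Matrix.isUnit_iff_isUnit_det]
    exact ⟨Unitary.toUnits (IsHermitian.eigenvectorUnitary hA.1), rfl⟩
  have := posDef_conj hd hU
  rw [Unitary.conjStarAlgAut_apply]
  rwa [Matrix.star_eq_conjTranspose] at *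

lemma mpow_posDef {A : Matrix n n ℂ} (hA : A.PosDef) (r : ℝ) : (mpow A r).PosDef := by
  rw [mpow_eq hA.1]
  exact cfc_posDef hA fun i => Real.rpow_pos_of_pos (hA.eigenvalues_pos i) r

lemma mpow_mul_mpow {A : Matrix n n ℂ} (hA : A.PosDef) (r s : ℝ) :
    mpow A r * mpow A s = mpow A (r + s) := by
  rw [mpow_eq hA.1, mpow_eq hA.1, mpow_eq hA.1,
    ← cfc_mul _ _ A (contOn_spectrum A _) (contOn_spectrum A _)]
  apply cfc_congr
  intro x hx
  rw [hA.isHermitian.spectrum_real_eq_range_eigenvalues] at hx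
  obtain ⟨i, rfl⟩ := hx
  exact (Real.rpow_add (hA.eigenvalues_pos i) r s).symm

lemma mpow_one' {A : Matrix n n ℂ} (hA : A.PosDef) : mpow A 1 = A := by
  rw [mpow_eq hA.1]
  simp only [Real.rpow_one]
  exact cfc_id' ℝ A hA.1

lemma mpow_zero' {A : Matrix n n ℂ} (hA : A.PosDef) : mpow A 0 = 1 := by
  rw [mpow_eq hA.1]
  simp only [Real.rpow_zero]
  exact cfc_const_one ℝ A hA.1

lemma mpow_neg_one {A : Matrix n n ℂ} (hA : A.PosDef) : mpow A (-1) = A⁻¹ := by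
  symm
  apply inv_eq_right_inv
  nth_rewrite 1 [← mpow_one' hA]
  rw [mpow_mul_mpow hA]
  norm_num [mpow_zero' hA]

lemma posDef_det_isUnit {A : Matrix n n ℂ} (hA : A.PosDef) : IsUnit A.det :=
  isUnit_iff_ne_zero.mpr hA.det_pos.ne'

lemma trace_conj_pos {N : Matrix n n ℂ} (hN : N ≠ 0) : 0 < (Nᴴ * N).trace.re := by
  have htr : (Nᴴ * N).trace = ∑ i, ∑ j, (starRingEnd ℂ) (N j i) * N j i := by
    simp [Matrix.trace, Matrix.diag, Matrix.mul_apply, conjTranspose_apply]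
  have hre : (Nᴴ * N).trace.re = ∑ i, ∑ j, Complex.normSq (N j i) := by
    rw [htr, Complex.re_sum]
    refine Finset.sum_congr rfl fun i _ => ?_
    rw [Complex.re_sum]
    refine Finset.sum_congr rfl fun j _ => ?_
    simp [Complex.mul_re, Complex.normSq_apply]
  rw [hre]
  obtain ⟨a, b, hab⟩ : ∃ a b, N a b ≠ 0 := by
    by_contra h
    push_neg at h
    exact hN (Matrix.ext fun i j => h i j)
  refine Finset.sum_pos' (fun i _ => Finset.sum_nonneg fun j _ => Complex.normSq_nonneg _)
    ⟨b, Finset.mem_univ _, Finset.sum_pos'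
      (fun j _ => Complex.normSq_nonneg _)
      ⟨a, Finset.mem_univ _, Complex.normSq_pos.mpr hab⟩⟩

/-- The key inequality: if `G A G = C` with `G` positive definite, then `G` is the unique
minimizer of `Y ↦ Tr(YA) + Tr(Y⁻¹C)`. -/
lemma main_aux {G A C : Matrix n n ℂ} (hA : A.PosDef) (hG : G.PosDef)
    (hGAG : G * A * G = C) :
    ∀ Y : Matrix n n ℂ, Y.PosDef → Y ≠ G →
      ((G * A).trace + (G⁻¹ * C).trace).re < ((Y * A).trace + (Y⁻¹ * C).trace).re := by
  have hGdet : IsUnit G.det := posDef_det_isUnit hG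
  have hGinvC : G⁻¹ * C = A * G := by
    rw [← hGAG]
    calc G⁻¹ * (G * A * G) = (G⁻¹ * G) * (A * G) := by simp only [Matrix.mul_assoc]
      _ = A * G := by rw [nonsing_inv_mul _ hGdet, Matrix.one_mul]
  have htrG : (G⁻¹ * C).trace = (G * A).trace := by rw [hGinvC, trace_mul_comm]
  intro Y hY hYne
  -- square roots
  set B := mpow A (1/2) with hBdef
  set B' := mpow A (-(1/2)) with hB'def
  have hBpd : B.PosDef := mpow_posDef hA _
  have hBB : B * B = A := by rw [hBdef, mpow_mul_mpow hA]; norm_num [mpow_one' hA]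
  have hBB' : B * B' = 1 := by rw [hBdef, hB'def, mpow_mul_mpow hA]; norm_num [mpow_zero' hA]
  set R := mpow Y (1/2) with hRdef
  set R' := mpow Y (-(1/2)) with hR'def
  have hRpd : R.PosDef := mpow_posDef hY _
  have hR'pd : R'.PosDef := mpow_posDef hY _
  have hRR : R * R = Y := by rw [hRdef, mpow_mul_mpow hY]; norm_num [mpow_one' hY]
  have hRR' : R * R' = 1 := by rw [hRdef, hR'def, mpow_mul_mpow hY]; norm_num [mpow_zero' hY]
  have hR'R : R' * R = 1 := by rw [hRdef, hR'def, mpow_mul_mpow hY]; norm_num [mpow_zero' hY]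
  have hR'R' : R' * R' = Y⁻¹ := by
    rw [hR'def, mpow_mul_mpow hY]
    norm_num [mpow_neg_one hY]
  set M := R - R' * G with hMdef
  set N := M * B with hNdef
  have hNne : N ≠ 0 := by
    intro h0
    apply hYne
    have hM0 : M = 0 := by
      have h1 := congrArg (fun X => X * B') h0
      simpa [hNdef, Matrix.mul_assoc, hBB', Matrix.mul_one, Matrix.zero_mul] using h1
    have hRG : R = R' * G := by rwa [sub_eq_zero] at hM0
    calc Y = R * R := hRR.symm
      _ = R * (R' * G) := by rw [← hRG]
      _ = (R * R') * G := by rw [Matrix.mul_assoc]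
      _ = G := by rw [hRR', Matrix.one_mul]
  have hMh : Mᴴ = R - G * R' := by
    rw [hMdef, conjTranspose_sub, conjTranspose_mul, hRpd.1.eq, hR'pd.1.eq, hG.1.eq]
  have hMM : Mᴴ * M = Y + G * Y⁻¹ * G - (G + G) := by
    rw [hMh, hMdef, sub_mul, mul_sub, mul_sub]
    have e1 : R * (R' * G) = G := by rw [← Matrix.mul_assoc, hRR', Matrix.one_mul]
    have e2 : G * R' * R = G := by rw [Matrix.mul_assoc, hR'R, Matrix.mul_one]
    have e3 : G * R' * (R' * G) = G * Y⁻¹ * G := by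
      rw [Matrix.mul_assoc, ← Matrix.mul_assoc R' R' G, hR'R', ← Matrix.mul_assoc]
    rw [hRR, e1, e2, e3]
    abel
  have hNN : (Nᴴ * N).trace
      = (Y * A).trace + (Y⁻¹ * C).trace - ((G * A).trace + (G * A).trace) := by
    have h1 : (Nᴴ * N).trace = ((Mᴴ * M) * A).trace := by
      rw [hNdef, conjTranspose_mul, hBpd.1.eq,
        show B * Mᴴ * (M * B) = B * ((Mᴴ * M) * B) from by simp only [Matrix.mul_assoc],
        trace_mul_comm, Matrix.mul_assoc, hBB]
    have h2 : (G * Y⁻¹ * G * A).trace = (Y⁻¹ * C).trace := by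
      rw [show G * Y⁻¹ * G * A = G * (Y⁻¹ * G * A) from by simp only [Matrix.mul_assoc],
        trace_mul_comm,
        show Y⁻¹ * G * A * G = Y⁻¹ * (G * A * G) from by simp only [Matrix.mul_assoc], hGAG]
    rw [h1, hMM, sub_mul, add_mul, add_mul, trace_sub, trace_add, trace_add, h2]
  have hpos : 0 < (Nᴴ * N).trace.re := trace_conj_pos hNne
  have hre := congrArg Complex.re hNN
  simp only [Complex.sub_re, Complex.add_re] at hre
  rw [htrG]
  simp only [Complex.add_re]
  linarith

/-- For positive definite Hermitian `A`, `C`, the function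
`L(Y) = Tr(Y A) + Tr(Y⁻¹ C)` on positive definite Hermitian matrices attains its unique
global minimum at the matrix geometric mean `Y = A⁻¹ # C`. -/
theorem geoMean_unique_minimizer (A C : Matrix n n ℂ)
    (hA : A.PosDef) (hC : C.PosDef) :
    (invGeoMean A C).PosDef ∧
    ∀ Y : Matrix n n ℂ, Y.PosDef → Y ≠ invGeoMean A C →
      ((invGeoMean A C * A).trace + ((invGeoMean A C)⁻¹ * C).trace).re
        < ((Y * A).trace + (Y⁻¹ * C).trace).re := by
  set B := mpow A (1/2) with hBdef
  set B' := mpow A (-(1/2)) with hB'def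
  have hBpd : B.PosDef := mpow_posDef hA _
  have hB'pd : B'.PosDef := mpow_posDef hA _
  have hBB : B * B = A := by rw [hBdef, mpow_mul_mpow hA]; norm_num [mpow_one' hA]
  have hB'B : B' * B = 1 := by rw [hBdef, hB'def, mpow_mul_mpow hA]; norm_num [mpow_zero' hA]
  have hBB' : B * B' = 1 := by rw [hBdef, hB'def, mpow_mul_mpow hA]; norm_num [mpow_zero' hA]
  set S := B * C * B with hSdef
  have hSpd : S.PosDef := by
    have := posDef_conj hC (posDef_det_isUnit hBpd)
    rwa [hBpd.1.eq] at this
  set T := mpow S (1/2) with hTdef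
  have hTpd : T.PosDef := mpow_posDef hSpd _
  have hTT : T * T = S := by rw [hTdef, mpow_mul_mpow hSpd]; norm_num [mpow_one' hSpd]
  have hGdef : invGeoMean A C = B' * T * B' := rfl
  have hGpd : (invGeoMean A C).PosDef := by
    rw [hGdef]
    have := posDef_conj hTpd (posDef_det_isUnit hB'pd)
    rwa [hB'pd.1.eq] at this
  refine ⟨hGpd, ?_⟩
  have hGAG : invGeoMean A C * A * invGeoMean A C = C := by
    rw [hGdef, ← hBB]
    calc B' * T * B' * (B * B) * (B' * T * B')
        = B' * T * ((B' * B) * (B * B')) * (T * B') := by simp only [Matrix.mul_assoc]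
      _ = B' * (T * T) * B' := by
          rw [hB'B, hBB']
          simp only [Matrix.mul_one, Matrix.one_mul, Matrix.mul_assoc]
      _ = (B' * B) * C * (B * B') := by rw [hTT, hSdef]; simp only [Matrix.mul_assoc]
      _ = C := by rw [hB'B, hBB', Matrix.one_mul, Matrix.mul_one]
  exact main_aux hA hGpd hGAG
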